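/- arXiv:1505.02838 — 4 statements merged into one kernel-verified Lean document; each statement's English description precedes it below -/
import Mathlib

section
/- Let G be a finite simple graph with at least one edge and H a finite simple graph. If the independence complex Ind(G[H]) of the lexicographical product G[H] is shellable, then H is a complete graph K_m for some m ≥ 1. -/
open Finset

variable {V : Type*}

/-- A facet of a collection of faces `Δ` is a maximal face. -/
def IsFacet (Δ : Set (Finset V)) (F : Finset V) : Prop :=
  F ∈ Δ ∧ ∀ G ∈ Δ, F ⊆ G → F = G

/-- A complex is pure if all facets have the same cardinality. -/
def IsPure (Δ : Set (Finset V)) : Prop :=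
  ∀ F G, IsFacet Δ F → IsFacet Δ G → F.card = G.card

/-- Deletion of a vertex from a complex. -/
def del (Δ : Set (Finset V)) (x : V) : Set (Finset V) := {F ∈ Δ | x ∉ F}

/-- Link of a vertex in a complex. -/
def link [DecidableEq V] (Δ : Set (Finset V)) (x : V) : Set (Finset V) :=
  {F ∈ Δ | x ∉ F ∧ insert x F ∈ Δ}

/-- `F : Fin s → Finset V` is a shelling order of the facets of `Δ`. -/
def IsShelling [DecidableEq V] (Δ : Set (Finset V)) {s : ℕ} (F : Fin s → Finset V) : Prop :=
  (∀ i, IsFacet Δ (F i)) ∧ (∀ G, IsFacet Δ G → ∃ i, F i = G) ∧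
  Function.Injective F ∧
  (∀ i j : Fin s, j < i → ∃ x ∈ F i \ F j, ∃ k, k < i ∧ F i \ F k = {x})

/-- A complex is shellable if it is pure and admits a shelling order of its facets. -/
def Shellable [DecidableEq V] (Δ : Set (Finset V)) : Prop :=
  IsPure Δ ∧ ∃ (s : ℕ) (F : Fin s → Finset V), IsShelling Δ F

/-- A pure complex is vertex decomposable if it is a simplex (unique facet), or some vertex
has pure, vertex decomposable deletion and link. -/
inductive VertexDecomposable [DecidableEq V] : Set (Finset V) → Prop
  | simplex (Δ : Set (Finset V)) (h : ∃! F, IsFacet Δ F) : VertexDecomposable Δ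
  | step (Δ : Set (Finset V)) (x : V)
      (hdp : IsPure (del Δ x)) (hlp : IsPure (link Δ x))
      (hd : VertexDecomposable (del Δ x)) (hl : VertexDecomposable (link Δ x)) :
      VertexDecomposable Δ

/-- The independence complex of a graph: all independent sets. -/
def indComplex (G : SimpleGraph V) : Set (Finset V) :=
  {F | ∀ v ∈ F, ∀ w ∈ F, ¬ G.Adj v w}

/-- The lexicographical product `G[H]`. -/
def lexProd {α β : Type*} (G : SimpleGraph α) (H : SimpleGraph β) :
    SimpleGraph (α × β) where
  Adj p q := G.Adj p.1 q.1 ∨ (p.1 = q.1 ∧ H.Adj p.2 q.2)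
  symm := by
    constructor
    rintro p q (h | ⟨h1, h2⟩)
    · exact Or.inl h.symm
    · exact Or.inr ⟨h1.symm, h2.symm⟩
  loopless := by
    constructor
    rintro p (h | ⟨_, h⟩)
    · exact G.irrefl h
    · exact H.irrefl h

/-- The independence number of a graph. -/
noncomputable def indepNum (G : SimpleGraph V) : ℕ :=
  sSup {n | ∃ F : Finset V, F ∈ indComplex G ∧ F.card = n}

/-- The expansion of a graph `G`, where vertex `v` is replaced by `s v` copies,
and distinct vertices `(i,j)` and `(k,l)` are adjacent iff `i ~ k` in `G` or `i = k`. -/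
def expansion (G : SimpleGraph V) (s : V → ℕ) : SimpleGraph (Σ v : V, Fin (s v)) where
  Adj p q := p ≠ q ∧ (G.Adj p.1 q.1 ∨ p.1 = q.1)
  symm := by
    constructor
    rintro p q ⟨h1, h2 | h2⟩
    · exact ⟨h1.symm, Or.inl h2.symm⟩
    · exact ⟨h1.symm, Or.inr h2.symm⟩
  loopless := by constructor; rintro p ⟨h, _⟩; exact h rfl

/-- The circulant graph `C_n(S)`: vertices `x_a`, `x_b` are adjacent iff
`|a-b| ∈ S` or `n - |a-b| ∈ S`. -/
def circulant (n : ℕ) (S : Set ℕ) : SimpleGraph (Fin n) where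
  Adj a b := a ≠ b ∧ ((max a.val b.val - min a.val b.val) ∈ S ∨
      (n - (max a.val b.val - min a.val b.val)) ∈ S)
  symm := by
    constructor
    rintro a b ⟨h1, h2⟩
    refine ⟨h1.symm, ?_⟩
    rwa [max_comm, min_comm]
  loopless := by constructor; rintro a ⟨h, _⟩; exact h rfl

/-! Suppose `H` has two distinct non-adjacent vertices `x, y`, and let `K` be a
facet of `Ind(G[H])` meeting the fibre `{u} × V_H`. Replacing that fibre of `K` by `{u} × {x, y}`
gives an independent set, so by purity every nonempty fibre of a facet has at least two points.
Hence two facets differing in a single vertex have the same projection to `V_G`. In a shelling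
every facet is linked to the first one by such steps, so all facets have the same projection;
but a facet through `(v, x)` and one through `(w, x)` with `v ~ w` in `G` cannot. -/

theorem exists_isFacet_superset [Fintype V] {Δ : Set (Finset V)} {F : Finset V} (hF : F ∈ Δ) :
    ∃ K, IsFacet Δ K ∧ F ⊆ K := by
  obtain ⟨K, ⟨hKΔ, hFK⟩, hmax⟩ :=
    (Set.toFinite {K | K ∈ Δ ∧ F ⊆ K}).exists_maximal ⟨F, hF, subset_rfl⟩
  exact ⟨K, ⟨hKΔ, fun L hL hKL => (hmax ⟨hL, hFK.trans hKL⟩ hKL).antisymm' hKL⟩, hFK⟩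

theorem IsShelling.apply_eq_of_isFacet [DecidableEq V] {Δ : Set (Finset V)} {s : ℕ}
    {F : Fin s → Finset V} (hF : IsShelling Δ F) {γ : Type*} (φ : Finset V → γ)
    (hφ : ∀ A B x, IsFacet Δ A → IsFacet Δ B → A \ B = {x} → φ A = φ B)
    {A B : Finset V} (hA : IsFacet Δ A) (hB : IsFacet Δ B) : φ A = φ B := by
  obtain ⟨hfacet, hsurj, -, hstep⟩ := hF
  obtain ⟨i, rfl⟩ := hsurj A hA
  obtain ⟨j, rfl⟩ := hsurj B hB
  set z : Fin s := ⟨0, i.pos⟩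
  have hz : ∀ k, φ (F k) = φ (F z) := by
    intro k
    induction k using WellFoundedLT.induction with
    | ind k ih =>
      rcases Nat.eq_zero_or_pos k.val with hk | hk
      · exact congrArg (φ ∘ F) (Fin.ext hk)
      · obtain ⟨x, -, l, hlk, hkl⟩ := hstep k z hk
        exact (hφ _ _ x (hfacet k) (hfacet l) hkl).trans (ih l hlk)
  rw [hz i, hz j]

theorem Finset.image_subset_image_of_card_sdiff_le_one {α : Type*} [DecidableEq V]
    [DecidableEq α] {f : V → α} {A B : Finset V} (hAB : #(A \ B) ≤ 1)
    (hfib : ∀ a ∈ A, 2 ≤ #(A.filter (f · = f a))) : A.image f ⊆ B.image f := by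
  simp only [subset_iff, mem_image, forall_exists_index, and_imp]
  rintro _ a ha rfl
  obtain ⟨b, hb, hbAB⟩ := exists_mem_notMem_of_card_lt_card (hAB.trans_lt (hfib a ha))
  rw [mem_filter] at hb
  exact ⟨b, by simpa [hb.1] using hbAB, hb.2⟩

theorem IsPure.image_eq_image_of_sdiff_eq_singleton {α : Type*} [DecidableEq V] [DecidableEq α]
    {Δ : Set (Finset V)} (hΔ : IsPure Δ) {f : V → α}
    (hfib : ∀ K, IsFacet Δ K → ∀ a ∈ K, 2 ≤ #(K.filter (f · = f a)))
    {A B : Finset V} {x : V} (hA : IsFacet Δ A) (hB : IsFacet Δ B) (hAB : A \ B = {x}) :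
    A.image f = B.image f := by
  have hAB₁ : #(A \ B) = 1 := by rw [hAB, card_singleton]
  have hBA₁ : #(B \ A) = 1 := (card_sdiff_comm (hΔ A B hA hB)).symm.trans hAB₁
  exact (image_subset_image_of_card_sdiff_le_one hAB₁.le (hfib A hA)).antisymm
    (image_subset_image_of_card_sdiff_le_one hBA₁.le (hfib B hB))

theorem singleton_mem_indComplex (G : SimpleGraph V) (v : V) : {v} ∈ indComplex G := by
  simp [indComplex]

theorem pair_mem_indComplex [DecidableEq V] {G : SimpleGraph V} {v w : V} (h : ¬ G.Adj v w) :
    {v, w} ∈ indComplex G := by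
  simp [indComplex, h, SimpleGraph.adj_comm]

section LexProd

variable {α β : Type*} [DecidableEq α] [DecidableEq β] {G : SimpleGraph α} {H : SimpleGraph β}

theorem filter_fst_ne_union_mem_indComplex_lexProd {K : Finset (α × β)}
    (hK : K ∈ indComplex (lexProd G H)) {u : α} {b : β} (hub : (u, b) ∈ K) {M : Finset β}
    (hM : M ∈ indComplex H) :
    K.filter (·.1 ≠ u) ∪ M.image (Prod.mk u) ∈ indComplex (lexProd G H) := by
  have hu : ∀ p ∈ K, ¬ G.Adj p.1 u := fun p hp h => hK p hp _ hub (Or.inl h)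
  simp only [indComplex, Set.mem_ofPred_eq, mem_union, mem_filter, mem_image] at hK hM ⊢
  rintro p (⟨hp, hpu⟩ | ⟨c, hc, rfl⟩) q (⟨hq, hqu⟩ | ⟨d, hd, rfl⟩) (hadj | ⟨heq, hadj⟩)
  · exact hK p hp q hq (Or.inl hadj)
  · exact hK p hp q hq (Or.inr ⟨heq, hadj⟩)
  · exact hu p hp hadj
  · exact hpu heq
  · exact hu q hq hadj.symm
  · exact hqu heq.symm
  · exact G.irrefl hadj
  · exact hM c hc d hd hadj

theorem IsPure.card_le_card_filter_fst [Fintype α] [Fintype β]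
    (hpure : IsPure (indComplex (lexProd G H))) {K : Finset (α × β)}
    (hK : IsFacet (indComplex (lexProd G H)) K) {u : α} {b : β} (hub : (u, b) ∈ K)
    {M : Finset β} (hM : M ∈ indComplex H) : #M ≤ #(K.filter (·.1 = u)) := by
  obtain ⟨L, hL, hsub⟩ :=
    exists_isFacet_superset (filter_fst_ne_union_mem_indComplex_lexProd hK.1 hub hM)
  have hdisj : Disjoint (K.filter (·.1 ≠ u)) (M.image (Prod.mk u)) := by
    simp +contextual [disjoint_left, eq_comm]
  have hcard := card_le_card hsub
  rw [card_union_of_disjoint hdisj, card_image_of_injective _ (Prod.mk_right_injective u),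
    ← hpure K L hK hL] at hcard
  have : #(K.filter (·.1 = u)) + #(K.filter (·.1 ≠ u)) = #K := card_filter_add_card_filter_not _
  omega

theorem eq_top_of_shellable_indComplex_lexProd [Fintype α] [Fintype β]
    (hG : ∃ v w, G.Adj v w) (hsh : Shellable (indComplex (lexProd G H))) : H = ⊤ := by
  obtain ⟨hpure, s, F, hF⟩ := hsh
  by_contra hH
  obtain ⟨x, y, hxy, hnadj⟩ := SimpleGraph.ne_top_iff_exists_not_adj.mp hH
  have hfib : ∀ K, IsFacet (indComplex (lexProd G H)) K → ∀ p ∈ K,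
      2 ≤ #(K.filter (·.1 = p.1)) := fun K hK p hp =>
    (card_pair hxy).ge.trans
      (hpure.card_le_card_filter_fst hK hp (pair_mem_indComplex hnadj))
  have hproj : ∀ A B, IsFacet (indComplex (lexProd G H)) A →
      IsFacet (indComplex (lexProd G H)) B → A.image Prod.fst = B.image Prod.fst :=
    fun A B hA hB => hF.apply_eq_of_isFacet _
      (fun _ _ _ => hpure.image_eq_image_of_sdiff_eq_singleton hfib) hA hB
  obtain ⟨v, w, hvw⟩ := hG
  obtain ⟨Kv, hKv, hvKv⟩ := exists_isFacet_superset (singleton_mem_indComplex _ (v, x))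
  obtain ⟨Kw, hKw, hwKw⟩ := exists_isFacet_superset (singleton_mem_indComplex _ (w, x))
  have hv : v ∈ Kw.image Prod.fst :=
    hproj Kv Kw hKv hKw ▸ mem_image_of_mem _ (singleton_subset_iff.mp hvKv)
  obtain ⟨p, hp, rfl⟩ := mem_image.mp hv
  exact hKw.1 p hp _ (singleton_subset_iff.mp hwKw) (Or.inl hvw)

end LexProd

theorem stmt4 {α β : Type*} [Fintype α] [Fintype β] [DecidableEq α] [DecidableEq β]
    [Nonempty β] (G : SimpleGraph α) (H : SimpleGraph β)
    (hG : ∃ v w, G.Adj v w)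
    (hsh : Shellable (indComplex (lexProd G H))) :
    ∃ m : ℕ, 1 ≤ m ∧ Nonempty (H ≃g (⊤ : SimpleGraph (Fin m))) := by
  obtain rfl := eq_top_of_shellable_indComplex_lexProd hG hsh
  exact ⟨Fintype.card β, Fintype.card_pos,
    ⟨SimpleGraph.Iso.completeGraph (Fintype.equivFin β)⟩⟩
end

section
/- Let G and H be finite simple graphs. Then the independence number of the lexicographical product satisfies α(G[H]) = α(G)·α(H). -/
open Finset

variable {V : Type*}

/-!
An independent set of `G[H]` projects onto an independent set of `G`, and its fibre over each
vertex of `G` is an independent set of `H`; counting fibrewise gives `α(G[H]) ≤ α(G) α(H)`.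
Conversely, the product of maximum independent sets of `G` and `H` is independent in `G[H]`.
-/

section IndepNum

variable {V : Type*} [Fintype V] (G : SimpleGraph V)

lemma bddAbove_card_indComplex :
    BddAbove {n | ∃ F : Finset V, F ∈ indComplex G ∧ F.card = n} :=
  ⟨Fintype.card V, by rintro n ⟨F, -, rfl⟩; exact F.card_le_univ⟩

lemma card_le_indepNum {F : Finset V} (hF : F ∈ indComplex G) : F.card ≤ indepNum G :=
  le_csSup (bddAbove_card_indComplex G) ⟨F, hF, rfl⟩

lemma exists_card_eq_indepNum : ∃ F ∈ indComplex G, F.card = indepNum G :=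
  Nat.sSup_mem (s := {n | ∃ F : Finset V, F ∈ indComplex G ∧ F.card = n})
    ⟨0, ∅, by simp [indComplex], card_empty⟩ (bddAbove_card_indComplex G)

end IndepNum

section LexProd

variable {α β : Type*} {G : SimpleGraph α} {H : SimpleGraph β}

lemma product_mem_indComplex_lexProd {A : Finset α} {B : Finset β}
    (hA : A ∈ indComplex G) (hB : B ∈ indComplex H) : A ×ˢ B ∈ indComplex (lexProd G H) := by
  rintro ⟨a, b⟩ hab ⟨c, d⟩ hcd (hac | ⟨-, hbd⟩)
  · exact hA a (mem_product.1 hab).1 c (mem_product.1 hcd).1 hac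
  · exact hB b (mem_product.1 hab).2 d (mem_product.1 hcd).2 hbd

variable {F : Finset (α × β)}

lemma image_fst_mem_indComplex_of_lexProd [DecidableEq α]
    (hF : F ∈ indComplex (lexProd G H)) :
    F.image Prod.fst ∈ indComplex G := by
  simp only [indComplex, Set.mem_ofPred_eq, mem_image]
  rintro _ ⟨p, hp, rfl⟩ _ ⟨q, hq, rfl⟩ hpq
  exact hF p hp q hq (Or.inl hpq)

lemma image_snd_fiber_mem_indComplex_of_lexProd [DecidableEq α] [DecidableEq β]
    (hF : F ∈ indComplex (lexProd G H)) (a : α) :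
    {p ∈ F | p.1 = a}.image Prod.snd ∈ indComplex H := by
  simp only [indComplex, Set.mem_ofPred_eq, mem_image, mem_filter]
  rintro _ ⟨p, ⟨hp, rfl⟩, rfl⟩ _ ⟨q, ⟨hq, hqp⟩, rfl⟩ hpq
  exact hF p hp q hq (Or.inr ⟨hqp.symm, hpq⟩)

lemma card_fiber_le_indepNum_of_lexProd [DecidableEq α] [Fintype β]
    (hF : F ∈ indComplex (lexProd G H)) (a : α) :
    #{p ∈ F | p.1 = a} ≤ indepNum H := by
  classical
  have hinj : Set.InjOn Prod.snd (↑{p ∈ F | p.1 = a} : Set (α × β)) := by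
    intro p hp q hq hpq
    simp only [coe_filter, Set.mem_ofPred_eq] at hp hq
    exact Prod.ext (hp.2.trans hq.2.symm) hpq
  rw [← card_image_of_injOn hinj]
  exact card_le_indepNum H (image_snd_fiber_mem_indComplex_of_lexProd hF a)

end LexProd

theorem stmt7 {α β : Type*} [Fintype α] [Fintype β]
    (G : SimpleGraph α) (H : SimpleGraph β) :
    indepNum (lexProd G H) = indepNum G * indepNum H := by
  classical
  apply le_antisymm
  · obtain ⟨F, hF, hFcard⟩ := exists_card_eq_indepNum (lexProd G H)
    calc indepNum (lexProd G H) = #F := hFcard.symm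
      _ ≤ indepNum H * #(F.image Prod.fst) :=
          card_le_mul_card_image F _ fun a _ ↦ card_fiber_le_indepNum_of_lexProd hF a
      _ ≤ indepNum H * indepNum G :=
          Nat.mul_le_mul_left _ (card_le_indepNum G (image_fst_mem_indComplex_of_lexProd hF))
      _ = indepNum G * indepNum H := mul_comm _ _
  · obtain ⟨A, hA, hAcard⟩ := exists_card_eq_indepNum G
    obtain ⟨B, hB, hBcard⟩ := exists_card_eq_indepNum H
    rw [← hAcard, ← hBcard, ← card_product]
    exact card_le_indepNum _ (product_mem_indComplex_lexProd hA hB)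
end

section
/- Let G and H be finite simple graphs, and let F and F' be independent sets of the lexicographical product G[H] such that π₁(F) and π₁(F') are maximal independent sets of G with π₁(F) ≠ π₁(F'). Then |F ∩ F'| ≤ (α(G) − 1)·α(H). In particular, if α(H) ≥ 2 and |F'| = α(G)·α(H), then |F ∩ F'| < |F'| − 1. -/
open Finset

variable {V : Type*}

/-!
The columns `a` met by `F ∩ F'` lie in `π₁(F) ∩ π₁(F')`, a proper subset of the maximal independent
set `π₁(F)`, so there are at most `α(G) - 1` of them; and each column `{a} × V_H` meets the
independent set `F ∩ F'` of `G[H]` in a copy of an independent set of `H`.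
-/

lemma card_le_indepNum_s10 {V : Type*} [Finite V] (G : SimpleGraph V) {S : Finset V}
    (hS : S ∈ indComplex G) : S.card ≤ indepNum G :=
  le_csSup ⟨Nat.card V, by
    rintro n ⟨T, -, rfl⟩
    exact (Set.ncard_coe_finset T).symm.trans_le (Set.ncard_le_card _)⟩ ⟨S, hS, rfl⟩

lemma indComplex_mono {V : Type*} {G : SimpleGraph V} {S T : Finset V} (hST : S ⊆ T)
    (hT : T ∈ indComplex G) : S ∈ indComplex G :=
  fun v hv w hw => hT v (hST hv) w (hST hw)

lemma IsFacet.inter_ssubset {V : Type*} [DecidableEq V] {Δ : Set (Finset V)} {A B : Finset V}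
    (hA : IsFacet Δ A) (hB : B ∈ Δ) (hne : A ≠ B) : A ∩ B ⊂ A :=
  ⟨inter_subset_left, fun h => hne (hA.2 B hB fun _ ha => (mem_inter.mp (h ha)).2)⟩

section LexProd

variable {α β : Type*} [DecidableEq α] {G : SimpleGraph α} {H : SimpleGraph β}

lemma image_snd_filter_fst_mem_indComplex [DecidableEq β] {S : Finset (α × β)}
    (hS : S ∈ indComplex (lexProd G H)) (a : α) :
    ({p ∈ S | p.1 = a}.image Prod.snd) ∈ indComplex H := by
  simp only [indComplex, Set.mem_ofPred_eq, mem_image, mem_filter] at hS ⊢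
  rintro _ ⟨p, ⟨hp, rfl⟩, rfl⟩ _ ⟨q, ⟨hq, hqa⟩, rfl⟩ hpq
  exact hS p hp q hq (Or.inr ⟨hqa.symm, hpq⟩)

lemma card_filter_fst_eq_le_indepNum [Finite β] {S : Finset (α × β)}
    (hS : S ∈ indComplex (lexProd G H)) (a : α) :
    {p ∈ S | p.1 = a}.card ≤ indepNum H := by
  classical
  have hinj : Set.InjOn Prod.snd (↑{p ∈ S | p.1 = a} : Set (α × β)) := by
    intro p hp q hq h
    rw [mem_coe, mem_filter] at hp hq
    exact Prod.ext (hp.2.trans hq.2.symm) h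
  rw [← card_image_of_injOn hinj]
  exact card_le_indepNum_s10 H (image_snd_filter_fst_mem_indComplex hS a)

lemma card_le_indepNum_mul_card_image_fst [Finite β] {S : Finset (α × β)}
    (hS : S ∈ indComplex (lexProd G H)) :
    S.card ≤ indepNum H * (S.image Prod.fst).card :=
  card_le_mul_card_image S _ fun a _ => card_filter_fst_eq_le_indepNum hS a

end LexProd

theorem stmt10_general {α β : Type*} [Fintype α] [Fintype β] [DecidableEq α] [DecidableEq β]
    (G : SimpleGraph α) (H : SimpleGraph β)
    (F F' : Finset (α × β))
    (hF : F ∈ indComplex (lexProd G H))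
    (h1 : IsFacet (indComplex G) (F.image Prod.fst))
    (h2 : IsFacet (indComplex G) (F'.image Prod.fst))
    (hne : F.image Prod.fst ≠ F'.image Prod.fst) :
    (F ∩ F').card ≤ (indepNum G - 1) * indepNum H ∧
      (2 ≤ indepNum H → F'.card = indepNum G * indepNum H →
        (F ∩ F').card < F'.card - 1) := by
  have hcols : ((F ∩ F').image Prod.fst).card < indepNum G :=
    calc ((F ∩ F').image Prod.fst).card
        ≤ (F.image Prod.fst ∩ F'.image Prod.fst).card := card_le_card (image_inter_subset _ _ _)
      _ < (F.image Prod.fst).card := card_lt_card (h1.inter_ssubset h2.1 hne)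
      _ ≤ indepNum G := card_le_indepNum_s10 G h1.1
  have hbound : (F ∩ F').card ≤ (indepNum G - 1) * indepNum H :=
    calc (F ∩ F').card
        ≤ indepNum H * ((F ∩ F').image Prod.fst).card :=
          card_le_indepNum_mul_card_image_fst (indComplex_mono inter_subset_left hF)
      _ ≤ indepNum H * (indepNum G - 1) := Nat.mul_le_mul_left _ (by omega)
      _ = (indepNum G - 1) * indepNum H := Nat.mul_comm _ _
  refine ⟨hbound, fun hH hF'card => ?_⟩
  have hle : indepNum H ≤ indepNum G * indepNum H := Nat.le_mul_of_pos_left _ (by omega)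
  rw [Nat.sub_one_mul] at hbound
  omega

theorem stmt10 {α β : Type*} [Fintype α] [Fintype β] [DecidableEq α] [DecidableEq β]
    (G : SimpleGraph α) (H : SimpleGraph β)
    (F F' : Finset (α × β))
    (hF : F ∈ indComplex (lexProd G H)) (hF' : F' ∈ indComplex (lexProd G H))
    (h1 : IsFacet (indComplex G) (F.image Prod.fst))
    (h2 : IsFacet (indComplex G) (F'.image Prod.fst))
    (hne : F.image Prod.fst ≠ F'.image Prod.fst) :
    (F ∩ F').card ≤ (indepNum G - 1) * indepNum H ∧
      (2 ≤ indepNum H → F'.card = indepNum G * indepNum H →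
        (F ∩ F').card < F'.card - 1) :=
  stmt10_general G H F F' hF h1 h2 hne
end

section
/- Let G be a finite simple graph on vertices x_1, …, x_n and let (s_1, …, s_n) be an n-tuple of positive integers. Then the independence complex Ind(G) is vertex decomposable if and only if the independence complex of the expansion G^{(s_1,…,s_n)} is vertex decomposable. -/
open Finset

variable {V : Type*}

/-! Write `π : x_{i,j} ↦ x_i`. The independent sets of `G^{(s)}` are exactly the sets on which `π`
is injective and whose image is independent in `G`, so `Ind(G^{(s)})` is an instance of the
expansion `expandComplex π A Δ` of a complex `Δ` by a finite set `A` of copies of its vertices.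
Expansions are compared with `Δ` one copy at a time: for a copy `p` of a vertex `x`, the link of
`p` in the expansion is the expansion of the link of `x`, and the deletion of `p` is the expansion
of `Δ` by `A \ {p}`, or, when `p` was the last copy of `x`, the expansion of the deletion of `x`.
So a vertex decomposition of `Δ` at `x` lifts to one of the expansion at `p` (by induction on the
number of copies), and a vertex decomposition of the expansion at `p` projects to one of `Δ`,
either at `π p` or, when other copies of `π p` remain, by discarding `p`. Purity transfers both
ways because facets of the expansion are the injective lifts of facets of `Δ`. -/

section Complex

variable {α : Type*}

lemma del_subset (Δ : Set (Finset α)) (x : α) : del Δ x ⊆ Δ := fun _ h => h.1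

lemma IsLowerSet.del {Δ : Set (Finset α)} (hΔ : IsLowerSet Δ) (x : α) :
    IsLowerSet (del Δ x) :=
  fun _ _ hGF hF => ⟨hΔ hGF hF.1, fun hx => hF.2 (hGF hx)⟩

lemma isFacet_iff_maximal {Δ : Set (Finset α)} {F : Finset α} :
    IsFacet Δ F ↔ Maximal (· ∈ Δ) F :=
  ⟨fun h => ⟨h.1, fun G hG hFG => (h.2 G hG hFG).ge⟩,
    fun h => ⟨h.1, fun _ hG hFG => h.eq_of_le hG hFG⟩⟩

lemma isFacet_Iic_iff {M F : Finset α} : IsFacet (Set.Iic M) F ↔ F = M :=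
  ⟨fun h => h.2 M Set.self_mem_Iic h.1,
    by rintro rfl; exact ⟨Set.self_mem_Iic, fun _ hG hMG => le_antisymm hMG hG⟩⟩

lemma existsUnique_isFacet_Iic (M : Finset α) : ∃! F, IsFacet (Set.Iic M) F :=
  ⟨M, isFacet_Iic_iff.2 rfl, fun _ => isFacet_Iic_iff.1⟩

lemma IsPure.of_existsUnique_isFacet {Δ : Set (Finset α)} (h : ∃! F, IsFacet Δ F) :
    IsPure Δ := by
  obtain ⟨F, _, huniq⟩ := h
  intro G G' hG hG'
  rw [huniq G hG, huniq G' hG']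

lemma eq_Iic_of_isFacet {Δ : Set (Finset α)} {M : Finset α} (hΔ : IsLowerSet Δ)
    (hfin : Δ.Finite) (hM : IsFacet Δ M) (huniq : ∀ F, IsFacet Δ F → F = M) :
    Δ = Set.Iic M := by
  refine Set.Subset.antisymm (fun F hF => ?_) (fun F hF => hΔ hF hM.1)
  obtain ⟨G, hFG, hG⟩ := hfin.exists_le_maximal hF
  exact huniq G (isFacet_iff_maximal.2 hG) ▸ hFG

variable [DecidableEq α]

lemma link_subset (Δ : Set (Finset α)) (x : α) : link Δ x ⊆ Δ := fun _ h => h.1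

lemma IsLowerSet.link {Δ : Set (Finset α)} (hΔ : IsLowerSet Δ) (x : α) :
    IsLowerSet (link Δ x) :=
  fun _ _ hGF hF => ⟨hΔ hGF hF.1, fun hx => hF.2.1 (hGF hx),
    hΔ (Finset.insert_subset_insert x hGF) hF.2.2⟩

lemma del_Iic_insert {M : Finset α} {x : α} (hx : x ∉ M) :
    del (Set.Iic (insert x M)) x = Set.Iic M := by
  ext F
  simp only [del, Set.mem_ofPred_eq, Set.mem_Iic]
  exact ⟨fun ⟨h, hxF⟩ => (Finset.subset_insert_iff_of_notMem hxF).1 h,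
    fun h => ⟨h.trans (Finset.subset_insert x M), fun hxF => hx (h hxF)⟩⟩

lemma link_Iic_insert {M : Finset α} {x : α} (hx : x ∉ M) :
    link (Set.Iic (insert x M)) x = Set.Iic M := by
  ext F
  simp only [link, Set.mem_ofPred_eq, Set.mem_Iic]
  exact ⟨fun ⟨_, hxF, h⟩ => (Finset.insert_subset_insert_iff hxF).1 h,
    fun h => ⟨h.trans (Finset.subset_insert x M), fun hxF => hx (h hxF),
      Finset.insert_subset_insert x h⟩⟩

abbrev IsPureVertexDecomposable (Δ : Set (Finset α)) : Prop :=
  IsPure Δ ∧ VertexDecomposable Δ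

lemma VertexDecomposable.of_del_link {Δ : Set (Finset α)} (x : α)
    (hdel : IsPureVertexDecomposable (del Δ x)) (hlink : IsPureVertexDecomposable (link Δ x)) :
    VertexDecomposable Δ :=
  .step Δ x hdel.1 hlink.1 hdel.2 hlink.2

lemma isPureVertexDecomposable_Iic (M : Finset α) : IsPureVertexDecomposable (Set.Iic M) :=
  ⟨.of_existsUnique_isFacet (existsUnique_isFacet_Iic M), .simplex _ (existsUnique_isFacet_Iic M)⟩

end Complex

section Expansion

variable {α β : Type*} [DecidableEq α] {π : β → α}

def expandComplex (π : β → α) (A : Finset β) (Δ : Set (Finset α)) : Set (Finset β) :=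
  {F | F ⊆ A ∧ Set.InjOn π F ∧ F.image π ∈ Δ}

def Covers (π : β → α) (A : Finset β) (Δ : Set (Finset α)) : Prop :=
  ∀ F ∈ Δ, F ⊆ A.image π

lemma Covers.mono {A : Finset β} {Δ Δ' : Set (Finset α)} (hA : Covers π A Δ) (h : Δ' ⊆ Δ) :
    Covers π A Δ' :=
  fun F hF => hA F (h hF)

lemma Covers.finite {A : Finset β} {Δ : Set (Finset α)} (hA : Covers π A Δ) : Δ.Finite :=
  (A.image π).powerset.finite_toSet.subset fun F hF => Finset.mem_powerset.2 (hA F hF)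

lemma Covers.exists_lift {A : Finset β} {Δ : Set (Finset α)} (hA : Covers π A Δ) {H : Finset α}
    (hH : H ∈ Δ) : ∃ F ∈ expandComplex π A Δ, F.image π = H := by
  have hsurj : Set.SurjOn π A H := by
    rw [Set.SurjOn, ← Finset.coe_image]
    exact_mod_cast hA H hH
  obtain ⟨F, hFA, hinj, rfl⟩ := Finset.exists_subset_injOn_image_eq_of_surjOn _ H hsurj
  exact ⟨F, ⟨Finset.coe_subset.1 hFA, hinj, hH⟩, rfl⟩

lemma expandComplex_del_of_forall_ne {A : Finset β} (Δ : Set (Finset α)) {x : α}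
    (h : ∀ q ∈ A, π q ≠ x) : expandComplex π A (del Δ x) = expandComplex π A Δ := by
  ext F
  simp only [del, expandComplex, Set.mem_ofPred_eq, Finset.mem_image, not_exists, not_and]
  exact ⟨fun ⟨hFA, hinj, hFΔ, _⟩ => ⟨hFA, hinj, hFΔ⟩,
    fun ⟨hFA, hinj, hFΔ⟩ => ⟨hFA, hinj, hFΔ, fun q hq => h q (hFA hq)⟩⟩

lemma expandComplex_Iic_empty (A : Finset β) :
    expandComplex π A (Set.Iic (∅ : Finset α)) = Set.Iic ∅ := by
  ext F
  simp only [expandComplex, Set.mem_ofPred_eq, Set.mem_Iic, Finset.subset_empty,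
    Finset.image_eq_empty]
  exact ⟨fun h => h.2.2, by rintro rfl; simp⟩

lemma isFacet_expandComplex {A : Finset β} {Δ : Set (Finset α)} {F : Finset β}
    (hF : F ∈ expandComplex π A Δ) (hFΔ : IsFacet Δ (F.image π)) :
    IsFacet (expandComplex π A Δ) F := by
  refine ⟨hF, fun G ⟨_, hGinj, hGΔ⟩ hFG => Finset.Subset.antisymm hFG fun q hq => ?_⟩
  have himage : F.image π = G.image π := hFΔ.2 _ hGΔ (Finset.image_subset_image hFG)
  obtain ⟨r, hr, hrq⟩ := Finset.mem_image.1 (himage ▸ Finset.mem_image_of_mem π hq)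
  exact hGinj (hFG hr) hq hrq ▸ hr

lemma IsPure.of_expandComplex {A : Finset β} {Δ : Set (Finset α)} (hA : Covers π A Δ)
    (hpure : IsPure (expandComplex π A Δ)) : IsPure Δ := by
  intro H H' hH hH'
  obtain ⟨F, hF, rfl⟩ := hA.exists_lift hH.1
  obtain ⟨F', hF', rfl⟩ := hA.exists_lift hH'.1
  rw [Finset.card_image_of_injOn hF.2.1, Finset.card_image_of_injOn hF'.2.1]
  exact hpure _ _ (isFacet_expandComplex hF hH) (isFacet_expandComplex hF' hH')

variable [DecidableEq β]

lemma injOn_insert_of_notMem_image {F : Finset β} {q : β} (hinj : Set.InjOn π F)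
    (hq : π q ∉ F.image π) : Set.InjOn π ↑(insert q F) := by
  have hqF : q ∉ F := fun hqF => hq (Finset.mem_image_of_mem π hqF)
  rw [Finset.coe_insert, Set.injOn_insert (by exact_mod_cast hqF), ← Finset.coe_image]
  exact ⟨hinj, by exact_mod_cast hq⟩

lemma Covers.erase_of_mem {A : Finset β} {Δ : Set (Finset α)} (hA : Covers π A Δ) {p q : β}
    (hq : q ∈ A.erase p) (hqp : π q = π p) : Covers π (A.erase p) Δ := by
  intro F hF v hv
  obtain ⟨r, hr, rfl⟩ := Finset.mem_image.1 (hA F hF hv)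
  by_cases hrp : r = p
  · exact Finset.mem_image.2 ⟨q, hq, hrp ▸ hqp⟩
  · exact Finset.mem_image_of_mem π (Finset.mem_erase.2 ⟨hrp, hr⟩)

lemma Covers.erase_del {A : Finset β} {Δ : Set (Finset α)} (hA : Covers π A Δ) (p : β) :
    Covers π (A.erase p) (del Δ (π p)) := by
  rintro F ⟨hF, hpF⟩ v hv
  obtain ⟨r, hr, rfl⟩ := Finset.mem_image.1 (hA F hF hv)
  have hrp : r ≠ p := by rintro rfl; exact hpF hv
  exact Finset.mem_image_of_mem π (Finset.mem_erase.2 ⟨hrp, hr⟩)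

lemma del_expandComplex (A : Finset β) (Δ : Set (Finset α)) (p : β) :
    del (expandComplex π A Δ) p = expandComplex π (A.erase p) Δ := by
  ext F
  simp only [del, expandComplex, Set.mem_ofPred_eq, Finset.subset_erase]
  tauto

lemma del_expandComplex_of_not_covers {A : Finset β} {Δ : Set (Finset α)} (hA : Covers π A Δ)
    {p : β} (h : ¬ Covers π (A.erase p) Δ) :
    del (expandComplex π A Δ) p = expandComplex π (A.erase p) (del Δ (π p)) := by
  rw [del_expandComplex, expandComplex_del_of_forall_ne]
  exact fun q hq hqp => h (hA.erase_of_mem hq hqp)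

lemma link_expandComplex {A : Finset β} (Δ : Set (Finset α)) {p : β} (hp : p ∈ A) :
    link (expandComplex π A Δ) p = expandComplex π A (link Δ (π p)) := by
  ext F
  simp only [link, expandComplex, Set.mem_ofPred_eq, Finset.insert_subset_iff,
    Finset.image_insert]
  constructor
  · rintro ⟨⟨hFA, hinj, hFΔ⟩, hpF, -, hinj', hpFΔ⟩
    have hπp : π p ∉ F.image π := by
      rw [Finset.mem_image]
      rintro ⟨q, hq, hqp⟩
      exact hpF (hinj' (by simp [hq]) (by simp) hqp ▸ hq)
    exact ⟨hFA, hinj, hFΔ, hπp, hpFΔ⟩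
  · rintro ⟨hFA, hinj, hFΔ, hπp, hpFΔ⟩
    have hpF : p ∉ F := fun hpF => hπp (Finset.mem_image_of_mem π hpF)
    exact ⟨⟨hFA, hinj, hFΔ⟩, hpF, ⟨hp, hFA⟩, injOn_insert_of_notMem_image hinj hπp, hpFΔ⟩

lemma IsFacet.image_of_expandComplex {A : Finset β} {Δ : Set (Finset α)} {F : Finset β}
    (hΔ : IsLowerSet Δ) (hA : Covers π A Δ) (hF : IsFacet (expandComplex π A Δ) F) :
    IsFacet Δ (F.image π) := by
  obtain ⟨⟨hFA, hinj, hFΔ⟩, hmax⟩ := hF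
  refine ⟨hFΔ, fun H hH hFH => Finset.Subset.antisymm hFH fun v hv => ?_⟩
  by_contra hvF
  obtain ⟨q, hqA, rfl⟩ := Finset.mem_image.1 (hA H hH hv)
  have hins : insert q F ∈ expandComplex π A Δ := by
    refine ⟨Finset.insert_subset hqA hFA, injOn_insert_of_notMem_image hinj hvF, ?_⟩
    rw [Finset.image_insert]
    exact hΔ (Finset.insert_subset hv hFH) hH
  have hqF : q ∈ F := hmax _ hins (Finset.subset_insert q F) ▸ Finset.mem_insert_self q F
  exact hvF (Finset.mem_image_of_mem π hqF)

lemma isPure_expandComplex {A : Finset β} {Δ : Set (Finset α)} (hΔ : IsLowerSet Δ)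
    (hA : Covers π A Δ) (hpure : IsPure Δ) : IsPure (expandComplex π A Δ) := by
  intro F G hF hG
  have hcard := hpure _ _ (hF.image_of_expandComplex hΔ hA) (hG.image_of_expandComplex hΔ hA)
  rwa [Finset.card_image_of_injOn hF.1.2.1, Finset.card_image_of_injOn hG.1.2.1] at hcard

lemma existsUnique_isFacet_of_expandComplex {A : Finset β} {Δ : Set (Finset α)}
    (hΔ : IsLowerSet Δ) (hA : Covers π A Δ) (h : ∃! F, IsFacet (expandComplex π A Δ) F) :
    ∃! H, IsFacet Δ H := by
  obtain ⟨F, hF, huniq⟩ := h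
  refine ⟨F.image π, hF.image_of_expandComplex hΔ hA, fun H hH => ?_⟩
  obtain ⟨F', hF', rfl⟩ := hA.exists_lift hH.1
  rw [huniq F' (isFacet_expandComplex hF' hH)]

lemma isPureVertexDecomposable_expandComplex_of_del_link {Δ : Set (Finset α)} {x : α}
    (hΔ : IsLowerSet Δ) (hpure : IsPure Δ)
    (hdel : ∀ A : Finset β, Covers π A (del Δ x) →
      IsPureVertexDecomposable (expandComplex π A (del Δ x)))
    (hlink : ∀ A : Finset β, Covers π A (link Δ x) →
      IsPureVertexDecomposable (expandComplex π A (link Δ x))) :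
    ∀ A : Finset β, Covers π A Δ → IsPureVertexDecomposable (expandComplex π A Δ) := by
  intro A
  induction A using Finset.strongInduction with
  | H A ih =>
    intro hA
    refine ⟨isPure_expandComplex hΔ hA hpure, ?_⟩
    by_cases hx : ∃ p ∈ A, π p = x
    · obtain ⟨p, hpA, rfl⟩ := hx
      refine .of_del_link p ?_ ?_
      · by_cases hcov : Covers π (A.erase p) Δ
        · rw [del_expandComplex]
          exact ih _ (Finset.erase_ssubset hpA) hcov
        · rw [del_expandComplex_of_not_covers hA hcov]
          exact hdel _ (hA.erase_del p)
      · rw [link_expandComplex Δ hpA]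
        exact hlink A (hA.mono (link_subset Δ _))
    · push Not at hx
      rw [← expandComplex_del_of_forall_ne Δ hx]
      exact (hdel A (hA.mono (del_subset Δ x))).2

lemma isPureVertexDecomposable_expandComplex_Iic (M : Finset α) :
    ∀ A : Finset β, Covers π A (Set.Iic M) →
      IsPureVertexDecomposable (expandComplex π A (Set.Iic M)) := by
  induction M using Finset.induction_on with
  | empty =>
    intro A _
    rw [expandComplex_Iic_empty]
    exact isPureVertexDecomposable_Iic ∅
  | insert x M hx ih =>
    refine isPureVertexDecomposable_expandComplex_of_del_link (x := x) (isLowerSet_Iic _)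
      (isPureVertexDecomposable_Iic _).1 ?_ ?_
    · rw [del_Iic_insert hx]
      exact ih
    · rw [link_Iic_insert hx]
      exact ih

lemma isPureVertexDecomposable_expandComplex {Δ : Set (Finset α)} (h : VertexDecomposable Δ)
    (hΔ : IsLowerSet Δ) (hpure : IsPure Δ) :
    ∀ A : Finset β, Covers π A Δ → IsPureVertexDecomposable (expandComplex π A Δ) := by
  induction h with
  | simplex Δ huniq =>
    intro A hA
    obtain ⟨M, hM, huniq⟩ := huniq
    obtain rfl := eq_Iic_of_isFacet hΔ hA.finite hM huniq
    exact isPureVertexDecomposable_expandComplex_Iic M A hA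
  | step Δ x hdp hlp _ _ ihd ihl =>
    exact isPureVertexDecomposable_expandComplex_of_del_link hΔ hpure (ihd (hΔ.del x) hdp)
      (ihl (hΔ.link x) hlp)

lemma vertexDecomposable_of_expandComplex {Θ : Set (Finset β)} (h : VertexDecomposable Θ) :
    ∀ (A : Finset β) (Δ : Set (Finset α)), Θ = expandComplex π A Δ → IsLowerSet Δ →
      Covers π A Δ → VertexDecomposable Δ := by
  induction h with
  | simplex Θ huniq =>
    rintro A Δ rfl hΔ hA
    exact .simplex Δ (existsUnique_isFacet_of_expandComplex hΔ hA huniq)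
  | step Θ p hdp hlp _ _ ihd ihl =>
    rintro A Δ rfl hΔ hA
    by_cases hcov : Covers π (A.erase p) Δ
    · exact ihd _ _ (del_expandComplex A Δ p) hΔ hcov
    have hpA : p ∈ A := by
      by_contra hpA
      rw [Finset.erase_eq_of_notMem hpA] at hcov
      exact hcov hA
    have hAdel := hA.erase_del p
    have hAlink := hA.mono (link_subset Δ (π p))
    rw [del_expandComplex_of_not_covers hA hcov] at hdp ihd
    rw [link_expandComplex Δ hpA] at hlp ihl
    exact .step Δ (π p) (hdp.of_expandComplex hAdel) (hlp.of_expandComplex hAlink)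
      (ihd _ _ rfl (hΔ.del _) hAdel) (ihl _ _ rfl (hΔ.link _) hAlink)

end Expansion

section Graph

variable {V : Type*}

lemma isLowerSet_indComplex (G : SimpleGraph V) : IsLowerSet (indComplex G) :=
  fun _ _ hHF hF v hv w hw => hF v (hHF hv) w (hHF hw)

variable [Fintype V] [DecidableEq V]

lemma covers_univ_fst {s : V → ℕ} (hs : ∀ v, 1 ≤ s v) (Δ : Set (Finset V)) :
    Covers Sigma.fst (Finset.univ : Finset (Σ v, Fin (s v))) Δ :=
  fun _ _ v _ => Finset.mem_image.2 ⟨⟨v, ⟨0, hs v⟩⟩, Finset.mem_univ _, rfl⟩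

lemma expandComplex_indComplex (G : SimpleGraph V) (s : V → ℕ) :
    expandComplex Sigma.fst Finset.univ (indComplex G) = indComplex (expansion G s) := by
  ext F
  simp only [expandComplex, indComplex, expansion, Set.mem_ofPred_eq, Finset.subset_univ,
    true_and, Finset.forall_mem_image]
  constructor
  · rintro ⟨hinj, hind⟩ p hp q hq ⟨hne, hadj | heq⟩
    exacts [hind hp hq hadj, hne (hinj hp hq heq)]
  · intro h
    refine ⟨fun p hp q hq heq => by_contra fun hne => h p hp q hq ⟨hne, .inr heq⟩,
      fun p hp q hq hadj => h p hp q hq ⟨?_, .inl hadj⟩⟩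
    rintro rfl
    exact G.loopless.irrefl _ hadj

end Graph

theorem stmt13 {V : Type*} [Fintype V] [DecidableEq V] (G : SimpleGraph V)
    (s : V → ℕ) (hs : ∀ v, 1 ≤ s v) :
    (IsPure (indComplex G) ∧ VertexDecomposable (indComplex G)) ↔
      (IsPure (indComplex (expansion G s)) ∧
        VertexDecomposable (indComplex (expansion G s))) := by
  have hA := covers_univ_fst hs (indComplex G)
  rw [← expandComplex_indComplex G s]
  constructor
  · rintro ⟨hpure, hvd⟩
    exact isPureVertexDecomposable_expandComplex hvd (isLowerSet_indComplex G) hpure _ hA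
  · rintro ⟨hpure, hvd⟩
    exact ⟨hpure.of_expandComplex hA,
      vertexDecomposable_of_expandComplex hvd _ _ rfl (isLowerSet_indComplex G) hA⟩
end
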